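/- arXiv:1702.07493 — 5 statements merged into one kernel-verified Lean document; each statement's English description precedes it below -/
import Mathlib

section
/- If a, b, r are real numbers with a > b > r ≥ |z| for a complex number z, and λ ∈ [0,1], then |z/(b−z) − λ·z/(a−z)| ≤ r/(b−r) − λ·r/(a−r). -/
/-!
With `u = z/(b-z)` and `v = z/(a-z)`, the left side is `‖(1-λ) u + λ (u - v)‖`.
Since `‖c - z‖ ≥ c - r`, we get `‖u‖ ≤ r/(b-r)`, and the factorisation `u - v = u · (a-b)/(a-z)`
gives `‖u - v‖ ≤ r/(b-r) · (a-b)/(a-r) = r/(b-r) - r/(a-r)`. The right side is exactly the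
same convex combination of these two bounds.
-/

open Set

lemma norm_div_sub_le_of_norm_le {𝕜 : Type*} [NormedField 𝕜] {c z : 𝕜} {r ρ : ℝ}
    (hz : ‖z‖ ≤ r) (hrρ : r < ρ) (hρc : ρ ≤ ‖c‖) (w : 𝕜) :
    ‖w / (c - z)‖ ≤ ‖w‖ / (ρ - r) := by
  have hcz : ρ - r ≤ ‖c - z‖ := by linarith [norm_sub_norm_le c z]
  rw [norm_div]
  exact div_le_div_of_nonneg_left (norm_nonneg w) (by linarith) hcz

section RCLike

variable {𝕜 : Type*} [RCLike 𝕜] {a b r : ℝ} {z : 𝕜}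

lemma norm_div_sub_le (hz : ‖z‖ ≤ r) (hrb : r < b) :
    ‖z / ((b : 𝕜) - z)‖ ≤ r / (b - r) := by
  have hb : b ≤ ‖(b : 𝕜)‖ := by rw [RCLike.norm_ofReal]; exact le_abs_self b
  calc ‖z / ((b : 𝕜) - z)‖ ≤ ‖z‖ / (b - r) := norm_div_sub_le_of_norm_le hz hrb hb z
    _ ≤ r / (b - r) := by gcongr

lemma sub_ne_zero_of_norm_le (hz : ‖z‖ ≤ r) (hrb : r < b) : (b : 𝕜) - z ≠ 0 := by
  rw [sub_ne_zero]
  rintro rfl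
  rw [RCLike.norm_ofReal] at hz
  linarith [le_abs_self b]

lemma norm_div_sub_sub_div_sub_le (hz : ‖z‖ ≤ r) (hrb : r < b) (hba : b < a) :
    ‖z / ((b : 𝕜) - z) - z / ((a : 𝕜) - z)‖ ≤ r / (b - r) - r / (a - r) := by
  have ha : a ≤ ‖(a : 𝕜)‖ := by rw [RCLike.norm_ofReal]; exact le_abs_self a
  have hab : ‖((a - b : ℝ) : 𝕜)‖ = a - b := by
    rw [RCLike.norm_ofReal, abs_of_pos (by linarith)]
  have hbz := sub_ne_zero_of_norm_le hz hrb
  have haz := sub_ne_zero_of_norm_le hz (hrb.trans hba)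
  have hfactor : z / ((b : 𝕜) - z) - z / ((a : 𝕜) - z) =
      z / ((b : 𝕜) - z) * (((a - b : ℝ) : 𝕜) / ((a : 𝕜) - z)) := by
    push_cast; field_simp; ring
  calc ‖z / ((b : 𝕜) - z) - z / ((a : 𝕜) - z)‖
      = ‖z / ((b : 𝕜) - z)‖ * ‖((a - b : ℝ) : 𝕜) / ((a : 𝕜) - z)‖ := by rw [hfactor, norm_mul]
    _ ≤ r / (b - r) * ((a - b) / (a - r)) := by
      have hu := norm_div_sub_le hz hrb
      have hw := (norm_div_sub_le_of_norm_le hz (hrb.trans hba) ha ((a - b : ℝ) : 𝕜)).trans_eq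
        (by rw [hab])
      exact mul_le_mul hu hw (norm_nonneg _) ((norm_nonneg _).trans hu)
    _ = r / (b - r) - r / (a - r) := by
      field_simp [show b - r ≠ 0 by linarith, show a - r ≠ 0 by linarith]; ring

end RCLike

lemma norm_sub_smul_le_of_mem_Icc {E : Type*} [SeminormedAddCommGroup E] [NormedSpace ℝ E]
    {t : ℝ} (ht : t ∈ Icc (0 : ℝ) 1) (u v : E) :
    ‖u - t • v‖ ≤ (1 - t) * ‖u‖ + t * ‖u - v‖ := by
  obtain ⟨ht0, ht1⟩ := ht
  calc ‖u - t • v‖ = ‖(1 - t) • u + t • (u - v)‖ := by congr 1; module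
    _ ≤ (1 - t) * ‖u‖ + t * ‖u - v‖ := by
      refine (norm_add_le _ _).trans_eq ?_
      rw [norm_smul, norm_smul, Real.norm_of_nonneg ht0, Real.norm_of_nonneg (by linarith)]

theorem stmt0_general (a b r lam : ℝ) (z : ℂ) (hab : a > b) (hbr : b > r)
    (hz : ‖z‖ ≤ r) (hlam : lam ∈ Set.Icc (0:ℝ) 1) :
    ‖z / ((b:ℂ) - z) - (lam:ℂ) * (z / ((a:ℂ) - z))‖ ≤
      r / (b - r) - lam * (r / (a - r)) := by
  obtain ⟨hlam0, hlam1⟩ := hlam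
  calc ‖z / ((b:ℂ) - z) - (lam:ℂ) * (z / ((a:ℂ) - z))‖
      = ‖z / ((b:ℂ) - z) - lam • (z / ((a:ℂ) - z))‖ := by rw [Complex.real_smul]
    _ ≤ (1 - lam) * ‖z / ((b:ℂ) - z)‖ + lam * ‖z / ((b:ℂ) - z) - z / ((a:ℂ) - z)‖ :=
      norm_sub_smul_le_of_mem_Icc ⟨hlam0, hlam1⟩ _ _
    _ ≤ (1 - lam) * (r / (b - r)) + lam * (r / (b - r) - r / (a - r)) := by
      gcongr
      exacts [norm_div_sub_le hz hbr, norm_div_sub_sub_div_sub_le hz hbr hab]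
    _ = r / (b - r) - lam * (r / (a - r)) := by ring

theorem stmt0 (a b r lam : ℝ) (z : ℂ) (hab : a > b) (hbr : b > r)
    (hr : 0 < r) (hz : ‖z‖ ≤ r) (hlam : lam ∈ Set.Icc (0:ℝ) 1) :
    ‖z / ((b:ℂ) - z) - (lam:ℂ) * (z / ((a:ℂ) - z))‖ ≤
      r / (b - r) - lam * (r / (a - r)) :=
  stmt0_general a b r lam z hab hbr hz hlam
end

section
/- If a, b, r are real numbers with a > b > r ≥ |z| for a complex number z, and λ ∈ [0,1], then Re(z/(b−z) − λ·z/(a−z)) ≤ r/(b−r) − λ·r/(a−r). -/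
/-!
For `|z| < c` we have `z / (c - z) = ∑_{k ≥ 1} z^k / c^k`, and likewise `r / (c - r) = ∑ r^k / c^k`.
Hence the right-hand side minus the left-hand side is the series
`∑_{k ≥ 1} (r^k - Re z^k) (b⁻ᵏ - λ a⁻ᵏ)`, whose terms are nonnegative because `Re z^k ≤ r^k`
and `λ a⁻ᵏ ≤ a⁻ᵏ ≤ b⁻ᵏ`.
-/

theorem hasSum_pow_succ_div {𝕜 : Type*} [NormedField 𝕜] {w c : 𝕜} (h : ‖w‖ < ‖c‖) :
    HasSum (fun k : ℕ ↦ (w / c) ^ (k + 1)) (w / (c - w)) := by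
  have hc : c ≠ 0 := norm_pos_iff.mp ((norm_nonneg w).trans_lt h)
  have hξ : ‖w / c‖ < 1 := by rwa [norm_div, div_lt_one (norm_pos_iff.mpr hc)]
  have key := (hasSum_geometric_of_norm_lt_one hξ).mul_left (w / c)
  rw [one_sub_div hc, inv_div, div_mul_div_cancel₀ hc] at key
  simpa only [← pow_succ'] using key

theorem Complex.re_div_ofReal_pow (z : ℂ) (c : ℝ) (k : ℕ) :
    ((z / c) ^ k).re = (z ^ k).re / c ^ k := by
  rw [div_pow, ← Complex.ofReal_pow, Complex.div_ofReal_re]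

theorem Complex.re_pow_le_of_norm_le {z : ℂ} {r : ℝ} (hz : ‖z‖ ≤ r) (k : ℕ) :
    (z ^ k).re ≤ r ^ k :=
  (Complex.re_le_norm _).trans <| by
    rw [norm_pow]; exact pow_le_pow_left₀ (norm_nonneg z) hz k

theorem div_pow_sub_mul_div_pow_le {u v a b lam : ℝ} (huv : u ≤ v) (hb : 0 < b) (hba : b ≤ a)
    (hlam : lam ≤ 1) (k : ℕ) :
    u / b ^ k - lam * (u / a ^ k) ≤ v / b ^ k - lam * (v / a ^ k) := by
  have hd : 0 ≤ (v - u) / a ^ k :=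
    div_nonneg (sub_nonneg.mpr huv) (pow_nonneg (hb.trans_le hba).le k)
  have key : lam * ((v - u) / a ^ k) ≤ (v - u) / b ^ k :=
    calc lam * ((v - u) / a ^ k) ≤ (v - u) / a ^ k := mul_le_of_le_one_left hd hlam
      _ ≤ (v - u) / b ^ k :=
        div_le_div_of_nonneg_left (sub_nonneg.mpr huv) (by positivity)
          (pow_le_pow_left₀ hb.le hba k)
  rw [sub_div, sub_div, mul_sub] at key
  linarith

theorem stmt1_general (a b r lam : ℝ) (z : ℂ) (hab : a > b) (hbr : b > r)
    (hz : ‖z‖ ≤ r) (hlam : lam ∈ Set.Icc (0:ℝ) 1) :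
    (z / ((b:ℂ) - z) - (lam:ℂ) * (z / ((a:ℂ) - z))).re ≤
      r / (b - r) - lam * (r / (a - r)) := by
  have hr : 0 ≤ r := (norm_nonneg z).trans hz
  have hb : 0 < b := hr.trans_lt hbr
  have hrc {c : ℝ} (hc : r < c) : ‖r‖ < ‖c‖ := by
    rwa [Real.norm_of_nonneg hr, Real.norm_of_nonneg (hr.trans hc.le)]
  have hzc {c : ℝ} (hc : r < c) : ‖z‖ < ‖(c : ℂ)‖ :=
    hz.trans_lt (by rwa [Complex.norm_real, Real.norm_of_nonneg (hr.trans hc.le)])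
  have hlhs := (Complex.hasSum_re (hasSum_pow_succ_div (hzc hbr))).sub
    ((Complex.hasSum_re (hasSum_pow_succ_div (hzc (hbr.trans hab)))).mul_left lam)
  have hrhs := (hasSum_pow_succ_div (hrc hbr)).sub
    ((hasSum_pow_succ_div (hrc (hbr.trans hab))).mul_left lam)
  rw [Complex.sub_re, Complex.re_ofReal_mul]
  refine hasSum_le (fun k ↦ ?_) hlhs hrhs
  rw [Complex.re_div_ofReal_pow, Complex.re_div_ofReal_pow, div_pow, div_pow]
  exact div_pow_sub_mul_div_pow_le (Complex.re_pow_le_of_norm_le hz _) hb hab.le hlam.2 _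

theorem stmt1 (a b r lam : ℝ) (z : ℂ) (hab : a > b) (hbr : b > r)
    (hr : 0 < r) (hz : ‖z‖ ≤ r) (hlam : lam ∈ Set.Icc (0:ℝ) 1) :
    (z / ((b:ℂ) - z) - (lam:ℂ) * (z / ((a:ℂ) - z))).re ≤
      r / (b - r) - lam * (r / (a - r)) :=
  stmt1_general a b r lam z hab hbr hz hlam
end

section
/- If b > a > r ≥ |z| for a complex number z and positive reals a, b, r, then |1/((a+z)(b−z))| ≤ 1/((a−r)(b+r)). -/
lemma mul_sub_le_add_mul_sub_of_abs_le {R : Type*} [CommRing R] [LinearOrder R] [IsStrictOrderedRing R]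
    {a b r x : R} (hab : a ≤ b) (hx : |x| ≤ r) :
    (a - r) * (b + r) ≤ (a + x) * (b - x) := by
  obtain ⟨hrx, hxr⟩ := abs_le.1 hx
  have hgap : (a + x) * (b - x) - (a - r) * (b + r) = (x + r) * (b - a + r - x) := by ring
  rw [← sub_nonneg, hgap]
  exact mul_nonneg (by linarith) (by linarith)

lemma mul_add_sub_le_norm_mul {a b r : ℝ} {z : ℂ} (hab : a ≤ b) (hra : r ≤ a) (hz : ‖z‖ ≤ r) :
    (a - r) * (b + r) ≤ ‖((a : ℂ) + z) * ((b : ℂ) - z)‖ := by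
  have hre : |z.re| ≤ r := (Complex.abs_re_le_norm z).trans hz
  have hleft : a + z.re ≤ ‖(a : ℂ) + z‖ := by simpa using Complex.re_le_norm ((a : ℂ) + z)
  have hright : b - z.re ≤ ‖(b : ℂ) - z‖ := by simpa using Complex.re_le_norm ((b : ℂ) - z)
  have hright_nonneg : 0 ≤ b - z.re := by linarith [(abs_le.1 hre).2]
  calc (a - r) * (b + r) ≤ (a + z.re) * (b - z.re) := mul_sub_le_add_mul_sub_of_abs_le hab hre
    _ ≤ ‖(a : ℂ) + z‖ * ‖(b : ℂ) - z‖ := mul_le_mul hleft hright hright_nonneg (norm_nonneg _)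
    _ = ‖((a : ℂ) + z) * ((b : ℂ) - z)‖ := (norm_mul _ _).symm

theorem stmt3_general (a b r : ℝ) (z : ℂ) (hba : b > a) (har : a > r)
    (hz : ‖z‖ ≤ r) :
    ‖(1 / (((a:ℂ) + z) * ((b:ℂ) - z)))‖ ≤ 1 / ((a - r) * (b + r)) := by
  have hr : 0 ≤ r := (norm_nonneg z).trans hz
  have hpos : 0 < (a - r) * (b + r) := mul_pos (by linarith) (by linarith)
  rw [norm_div, norm_one]
  exact one_div_le_one_div_of_le hpos (mul_add_sub_le_norm_mul hba.le har.le hz)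

theorem stmt3 (a b r : ℝ) (z : ℂ) (hba : b > a) (har : a > r) (hr : 0 < r)
    (hz : ‖z‖ ≤ r) :
    ‖(1 / (((a:ℂ) + z) * ((b:ℂ) - z)))‖ ≤ 1 / ((a - r) * (b + r)) :=
  stmt3_general a b r z hba har hz
end

section
/- Let a₁ > b₁ > 1 be real numbers and define m : [−1,1] → ℝ by m(t) = (b₁ − t)/((a₁² − 2a₁t + 1)(b₁² − 2b₁t + 1)). Then m is increasing on [−1,1]; in particular m(t) ≤ m(1) = (b₁ − 1)/((a₁−1)²(b₁−1)²) for all t ∈ [−1,1]. -/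
theorem stmt9 (a₁ b₁ : ℝ) (hab : a₁ > b₁) (hb : b₁ > 1) :
    MonotoneOn
      (fun t : ℝ => (b₁ - t) / ((a₁ ^ 2 - 2 * a₁ * t + 1) * (b₁ ^ 2 - 2 * b₁ * t + 1)))
      (Set.Icc (-1:ℝ) 1) ∧
    (∀ t ∈ Set.Icc (-1:ℝ) 1,
      (b₁ - t) / ((a₁ ^ 2 - 2 * a₁ * t + 1) * (b₁ ^ 2 - 2 * b₁ * t + 1)) ≤
        (b₁ - 1) / ((a₁ - 1) ^ 2 * (b₁ - 1) ^ 2)) := by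
  have ha : a₁ > 1 := lt_trans hb hab
  have hApos : ∀ x : ℝ, x ≤ 1 → 0 < a₁ ^ 2 - 2 * a₁ * x + 1 := by
    intro x hx; nlinarith [sq_nonneg (a₁ - 1)]
  have hBpos : ∀ x : ℝ, x ≤ 1 → 0 < b₁ ^ 2 - 2 * b₁ * x + 1 := by
    intro x hx; nlinarith [sq_nonneg (b₁ - 1)]
  have hVne : ∀ x : ℝ, x ≤ 1 →
      (a₁ ^ 2 - 2 * a₁ * x + 1) * (b₁ ^ 2 - 2 * b₁ * x + 1) ≠ 0 := by
    intro x hx; exact ne_of_gt (mul_pos (hApos x hx) (hBpos x hx))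
  have hderiv : ∀ x : ℝ, x ≤ 1 →
      HasDerivAt (fun t : ℝ => (b₁ - t) / ((a₁ ^ 2 - 2 * a₁ * t + 1) * (b₁ ^ 2 - 2 * b₁ * t + 1)))
        (((-1) * ((a₁ ^ 2 - 2 * a₁ * x + 1) * (b₁ ^ 2 - 2 * b₁ * x + 1)) -
          (b₁ - x) * ((-(2 * a₁)) * (b₁ ^ 2 - 2 * b₁ * x + 1) +
            (a₁ ^ 2 - 2 * a₁ * x + 1) * (-(2 * b₁)))) /
          ((a₁ ^ 2 - 2 * a₁ * x + 1) * (b₁ ^ 2 - 2 * b₁ * x + 1)) ^ 2) x := by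
    intro x hx
    have hu : HasDerivAt (fun t : ℝ => b₁ - t) (-1) x := by
      simpa using (hasDerivAt_id x).const_sub b₁
    have hA : HasDerivAt (fun t : ℝ => a₁ ^ 2 - 2 * a₁ * t + 1) (-(2 * a₁)) x := by
      have := (((hasDerivAt_id x).const_mul (2 * a₁)).const_sub (a₁ ^ 2)).add_const 1
      simpa using this
    have hB : HasDerivAt (fun t : ℝ => b₁ ^ 2 - 2 * b₁ * t + 1) (-(2 * b₁)) x := by
      have := (((hasDerivAt_id x).const_mul (2 * b₁)).const_sub (b₁ ^ 2)).add_const 1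
      simpa using this
    exact hu.div (hA.mul hB) (hVne x hx)
  have hmono : MonotoneOn
      (fun t : ℝ => (b₁ - t) / ((a₁ ^ 2 - 2 * a₁ * t + 1) * (b₁ ^ 2 - 2 * b₁ * t + 1)))
      (Set.Icc (-1:ℝ) 1) := by
    apply monotoneOn_of_deriv_nonneg (convex_Icc _ _)
    · apply ContinuousOn.div
      · fun_prop
      · fun_prop
      · intro x hx; exact hVne x hx.2
    · intro x hx
      rw [interior_Icc] at hx
      exact (hderiv x hx.2.le).differentiableAt.differentiableWithinAt
    · intro x hx
      rw [interior_Icc] at hx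
      rw [(hderiv x hx.2.le).deriv]
      apply div_nonneg _ (sq_nonneg _)
      have hA := hApos x hx.2.le
      have hB := hBpos x hx.2.le
      have hbx : 0 < b₁ - x := by linarith [hx.2]
      nlinarith [mul_pos hbx (mul_pos (show (0:ℝ) < a₁ by linarith) hB), mul_pos hA hB,
        mul_pos hA (mul_pos (show (0:ℝ) < b₁ by linarith) (sub_pos.mpr hb))]
  refine ⟨hmono, fun t ht => ?_⟩
  have := hmono ht (Set.right_mem_Icc.mpr (by norm_num)) ht.2
  simp only at this
  have heq : (a₁ ^ 2 - 2 * a₁ * 1 + 1) * (b₁ ^ 2 - 2 * b₁ * 1 + 1) =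
      (a₁ - 1) ^ 2 * (b₁ - 1) ^ 2 := by ring
  rw [heq] at this
  linarith
end

section
/- Let f be analytic on the disk U(r₀) = {z : |z| < r₀} with f(z) = z + Σₙ≥2 aₙ zⁿ, and suppose there exist interlacing positive sequences as in the Bessel setting such that z f''(z)/f'(z) = −Σₙ≥1 2z²/(αₙ² − z²) for |z| < α₁, where (αₙ) is strictly increasing positive with Σ 1/αₙ² < ∞ and α₁ ≤ r₀. Then for all |z| ≤ r < α₁: Re(1 + z f''(z)/f'(z)) − |z f''(z)/f'(z)| ≥ 1 + 2 r f''(r)/f'(r), i.e. ≥ 1 − Σₙ≥1 4r²/(αₙ² − r²). -/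
/-!
Each term `2z²/(αₙ² - z²)` of the expansion has modulus at most `2r²/(αₙ² - r²)`, the value
of the same term at `z = r`. Hence `‖z f''(z)/f'(z)‖ ≤ S := Σ 2r²/(αₙ² - r²) = -r f''(r)/f'(r)`,
and since `Re w ≥ -‖w‖`, `Re(1 + w) - ‖w‖ ≥ 1 - 2‖w‖ ≥ 1 - 2S`.
-/

lemma norm_div_sub_le_of_norm_le_s15 {w c : ℂ} {s : ℝ} (hw : ‖w‖ ≤ s) (hsc : s < ‖c‖) :
    ‖w / (c - w)‖ ≤ s / (‖c‖ - s) := by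
  rw [norm_div]
  have hden : ‖c‖ - s ≤ ‖c - w‖ := by linarith [norm_sub_norm_le c w]
  exact div_le_div₀ ((norm_nonneg w).trans hw) hw (by linarith) hden

lemma norm_sq_div_sq_sub_sq_le {z : ℂ} {r a : ℝ} (hz : ‖z‖ ≤ r) (hra : r < a) :
    ‖z ^ 2 / ((a : ℂ) ^ 2 - z ^ 2)‖ ≤ r ^ 2 / (a ^ 2 - r ^ 2) := by
  have hr : 0 ≤ r := (norm_nonneg z).trans hz
  have hnorm : ‖(a : ℂ) ^ 2‖ = a ^ 2 := by
    rw [norm_pow, Complex.norm_of_nonneg (hr.trans hra.le)]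
  rw [← hnorm]
  refine norm_div_sub_le_of_norm_le_s15 ?_ ?_
  · rw [norm_pow]
    exact pow_le_pow_left₀ (norm_nonneg z) hz 2
  · rw [hnorm]
    exact pow_lt_pow_left₀ hra hr two_ne_zero

lemma sq_div_sq_sub_sq_le {r a b : ℝ} (hr : 0 ≤ r) (hra : r < a) (hab : a ≤ b) :
    r ^ 2 / (b ^ 2 - r ^ 2) ≤ r ^ 2 * a ^ 2 / (a ^ 2 - r ^ 2) * (1 / b ^ 2) := by
  have ha : 0 < a := hr.trans_lt hra
  have hda : 0 < a ^ 2 - r ^ 2 := by nlinarith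
  have hab2 : a ^ 2 ≤ b ^ 2 := pow_le_pow_left₀ ha.le hab 2
  have hb : 0 < b := ha.trans_le hab
  rw [mul_one_div, div_div, div_le_div_iff₀ (by nlinarith) (by positivity)]
  nlinarith [mul_le_mul_of_nonneg_left hab2 (by positivity : (0 : ℝ) ≤ r ^ 2 * r ^ 2)]

lemma summable_sq_div_sq_sub_sq {α : ℕ → ℝ} (hα : Monotone α)
    (hsum : Summable fun n => 1 / α n ^ 2) {r : ℝ} (hr : 0 ≤ r) (hrα : r < α 0) :
    Summable fun n => r ^ 2 / (α n ^ 2 - r ^ 2) := by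
  have hpos : ∀ n, 0 < α n ^ 2 - r ^ 2 := fun n => by
    have := hα (Nat.zero_le n)
    nlinarith
  refine Summable.of_nonneg_of_le (fun n => by positivity [hpos n]) (fun n => ?_)
    (hsum.mul_left (r ^ 2 * α 0 ^ 2 / (α 0 ^ 2 - r ^ 2)))
  exact sq_div_sq_sub_sq_le hr hrα (hα (Nat.zero_le n))

lemma le_one_add_re_sub_norm {w : ℂ} {s : ℝ} (hw : ‖w‖ ≤ s) :
    1 - 2 * s ≤ (1 + w).re - ‖w‖ := by
  have hre : -‖w‖ ≤ w.re := neg_le_of_abs_le (Complex.abs_re_le_norm w)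
  rw [Complex.add_re, Complex.one_re]
  linarith

theorem stmt15_general (f : ℂ → ℂ)
    (α : ℕ → ℝ) (hαmono : StrictMono α)
    (hαsum : Summable fun n => 1 / (α n) ^ 2)
    (hexp : ∀ z : ℂ, ‖z‖ < α 0 →
      z * deriv (deriv f) z / deriv f z = -∑' n, 2 * z ^ 2 / (((α n : ℝ):ℂ) ^ 2 - z ^ 2)) :
    ∀ r : ℝ, ∀ z : ℂ, ‖z‖ ≤ r → r < α 0 →
      ((1 : ℂ) + z * deriv (deriv f) z / deriv f z).re
          - ‖z * deriv (deriv f) z / deriv f z‖ ≥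
        ((1 : ℂ) + 2 * ((r:ℂ) * deriv (deriv f) (r:ℂ) / deriv f (r:ℂ))).re ∧
      ((1 : ℂ) + z * deriv (deriv f) z / deriv f z).re
          - ‖z * deriv (deriv f) z / deriv f z‖ ≥
        1 - ∑' n, 4 * r ^ 2 / ((α n) ^ 2 - r ^ 2) := by
  intro r z hzr hrα
  have hr : 0 ≤ r := (norm_nonneg z).trans hzr
  have hrα' : ∀ n, r < α n := fun n => hrα.trans_le (hαmono.monotone (Nat.zero_le n))
  set S := ∑' n, 2 * (r ^ 2 / (α n ^ 2 - r ^ 2))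
  have hS : HasSum (fun n => 2 * (r ^ 2 / (α n ^ 2 - r ^ 2))) S :=
    ((summable_sq_div_sq_sub_sq hαmono.monotone hαsum hr hrα).mul_left 2).hasSum
  have hz : ‖z * deriv (deriv f) z / deriv f z‖ ≤ S := by
    rw [hexp z (hzr.trans_lt hrα), norm_neg]
    refine tsum_of_norm_bounded hS fun n => ?_
    rw [mul_div_assoc, norm_mul, Complex.norm_two]
    exact mul_le_mul_of_nonneg_left (norm_sq_div_sq_sub_sq_le hzr (hrα' n)) two_pos.le
  have hreal : (r : ℂ) * deriv (deriv f) r / deriv f r = -(S : ℂ) := by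
    rw [hexp r (by rwa [Complex.norm_of_nonneg hr]), Complex.ofReal_tsum]
    push_cast
    simp only [mul_div_assoc]
  have hS4 : ∑' n, 4 * r ^ 2 / (α n ^ 2 - r ^ 2) = 2 * S := by
    rw [← tsum_mul_left]
    congr 1 with n
    ring
  refine ⟨?_, ?_⟩
  · rw [hreal]
    simpa using le_one_add_re_sub_norm hz
  · rw [hS4]
    exact le_one_add_re_sub_norm hz

theorem stmt15 (f : ℂ → ℂ) (r₀ : ℝ) (hr₀ : 0 < r₀)
    (hf : AnalyticOn ℂ f (Metric.ball 0 r₀))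
    (hf0 : f 0 = 0) (hf'0 : deriv f 0 = 1)
    (α : ℕ → ℝ) (hαpos : ∀ n, 0 < α n) (hαmono : StrictMono α)
    (hαsum : Summable fun n => 1 / (α n) ^ 2) (hα₁ : α 0 ≤ r₀)
    (hexp : ∀ z : ℂ, ‖z‖ < α 0 →
      z * deriv (deriv f) z / deriv f z = -∑' n, 2 * z ^ 2 / (((α n : ℝ):ℂ) ^ 2 - z ^ 2)) :
    ∀ r : ℝ, ∀ z : ℂ, ‖z‖ ≤ r → r < α 0 →
      ((1 : ℂ) + z * deriv (deriv f) z / deriv f z).re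
          - ‖z * deriv (deriv f) z / deriv f z‖ ≥
        ((1 : ℂ) + 2 * ((r:ℂ) * deriv (deriv f) (r:ℂ) / deriv f (r:ℂ))).re ∧
      ((1 : ℂ) + z * deriv (deriv f) z / deriv f z).re
          - ‖z * deriv (deriv f) z / deriv f z‖ ≥
        1 - ∑' n, 4 * r ^ 2 / ((α n) ^ 2 - r ^ 2) :=
  stmt15_general f α hαmono hαsum hexp
end
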